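/- Variance of the first-order linearization of the logit factorial effect estimator (Proposition 3, variance expression): suppose 0 < P_z < 1 for all z ∈ {0,1}^K, and for a nonempty subset ℓ ⊆ {1,…,K} define the linearized statistic θ̃_ℓ = θ_ℓ + 2^{−(K−1)} Σ_{z ∈ {0,1}^K} λ_{ℓ,z} (p_z − P_z)/(P_z(1−P_z)), where θ_ℓ = 2^{−(K−1)} Σ_z λ_{ℓ,z} log(P_z/(1−P_z)). Then under a completely randomized assignment, Var(θ̃_ℓ) = 2^{−2(K−1)} ( Σ_{z} (N − N_z) S_z² / (N N_z P_z² (1−P_z)²) − (1/N) Σ_{z < z'} λ_{ℓ,z} λ_{ℓ,z'} (S_z² + S_{z'}² − S²_{z−z'})/(P_z P_{z'} (1−P_z)(1−P_{z'})) ), where the second sum is over unordered pairs of distinct treatments. -/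

import Mathlib

open Finset

/-- The finset of completely randomized assignments of `N` units to treatments in `J`
with group sizes `Nj`. -/
def assignments (N : ℕ) {J : Type*} [Fintype J] [DecidableEq J] (Nj : J → ℕ) :
    Finset (Fin N → J) :=
  Finset.univ.filter fun T => ∀ j, (Finset.univ.filter fun i => T i = j).card = Nj j

/-- Expectation with respect to the uniform distribution on completely randomized
assignments. -/
noncomputable def expect {N : ℕ} {J : Type*} [Fintype J] [DecidableEq J]
    (Nj : J → ℕ) (f : (Fin N → J) → ℝ) : ℝ :=
  (∑ T ∈ assignments N Nj, f T) / ((assignments N Nj).card : ℝ)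

/-- Variance with respect to the randomization distribution. -/
noncomputable def rvar {N : ℕ} {J : Type*} [Fintype J] [DecidableEq J]
    (Nj : J → ℕ) (f : (Fin N → J) → ℝ) : ℝ :=
  expect Nj fun T => (f T - expect Nj f) ^ 2

/-- Covariance with respect to the randomization distribution. -/
noncomputable def rcov {N : ℕ} {J : Type*} [Fintype J] [DecidableEq J]
    (Nj : J → ℕ) (f g : (Fin N → J) → ℝ) : ℝ :=
  expect Nj fun T => (f T - expect Nj f) * (g T - expect Nj g)

/-- Observed group mean `p_j` of treatment `j` under assignment `T`. -/
noncomputable def pObs {N : ℕ} {J : Type*} [DecidableEq J]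
    (Y : Fin N → J → ℝ) (Nj : J → ℕ) (j : J) (T : Fin N → J) : ℝ :=
  (∑ i ∈ Finset.univ.filter fun i => T i = j, Y i j) / (Nj j : ℝ)

/-- Population mean `P_j`. -/
noncomputable def Pmean {N : ℕ} {J : Type*} (Y : Fin N → J → ℝ) (j : J) : ℝ :=
  (∑ i, Y i j) / (N : ℝ)

/-- Population variance `S_j²`. -/
noncomputable def S2 {N : ℕ} {J : Type*} (Y : Fin N → J → ℝ) (j : J) : ℝ :=
  (∑ i, (Y i j - Pmean Y j) ^ 2) / ((N : ℝ) - 1)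

/-- Variance of unit-level differences `S²_{j-j'}`. -/
noncomputable def S2diff {N : ℕ} {J : Type*} (Y : Fin N → J → ℝ) (j j' : J) : ℝ :=
  (∑ i, (Y i j - Y i j' - (Pmean Y j - Pmean Y j')) ^ 2) / ((N : ℝ) - 1)

/-- Treatments in a `2^K` factorial experiment, indexed by `Fin (2^K)`: treatment `z`
corresponds to the element of `{0,1}^K` whose `k`-th coordinate is the `k`-th binary digit
of `z`. The contrast coefficient is `λ_{ℓ,z} = Π_{k∈ℓ} (2 z_k - 1)`. -/
def lam {K : ℕ} (ℓ : Finset (Fin K)) (z : Fin (2 ^ K)) : ℝ :=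
  ∏ k ∈ ℓ, (if Nat.testBit z.val k.val then 1 else -1)

/-!
Up to a constant, the linearized statistic is `∑ z, w z * p_z` with
`w z = 2^{-(K-1)} λ_{ℓ,z} / (P_z (1 - P_z))`, so its variance is the quadratic form
`∑ z z', w z w z' Cov(p_z, p_{z'})`. The covariances come from exchangeability of the units under
complete randomization: `P(T i = z) = N_z / N` and, for `i ≠ i'`,
`P(T i = z, T i' = z') = N_z (N_{z'} - δ_{zz'}) / (N (N - 1))`, which yield the classical
`Cov(p_z, p_{z'}) = (δ_{zz'} / N_z - 1 / N) S_{zz'}` for the population covariance `S_{zz'}`.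
Polarization `2 S_{zz'} = S_z² + S_{z'}² - S²_{z-z'}` and `λ_{ℓ,z}² = 1` finish the computation.
-/

lemma sum_sum_mul_ite_eq {ι R : Type*} [Fintype ι] [DecidableEq ι] [CommRing R]
    (x y : ι → R) (a b : R) :
    ∑ i, ∑ i', x i * y i' * (if i = i' then a else b)
      = (a - b) * ∑ i, x i * y i + b * ((∑ i, x i) * ∑ i, y i) := by
  have hsplit : ∀ i i' : ι, (if i = i' then a else b) = b + if i = i' then a - b else 0 :=
    fun i i' => by split_ifs <;> ring
  simp only [hsplit, mul_add, mul_ite, mul_zero, sum_add_distrib, sum_ite_eq, mem_univ, if_true]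
  rw [add_comm, sum_mul_sum, mul_sum, mul_sum]
  congr 1
  · exact sum_congr rfl fun i _ => by ring
  · exact sum_congr rfl fun i _ => by rw [mul_sum]; exact sum_congr rfl fun i' _ => by ring

lemma sum_sum_eq_sum_add_two_mul_sum_lt {ι R : Type*} [Fintype ι] [LinearOrder ι]
    [NonAssocSemiring R] (F : ι → ι → R) (hF : ∀ i i', F i i' = F i' i) :
    ∑ i, ∑ i', F i i' = ∑ i, F i i + 2 * ∑ i, ∑ i' with i < i', F i i' := by
  have hrow : ∀ i, ∑ i', F i i'
      = F i i + (∑ i' with i < i', F i i' + ∑ i' with i' < i, F i i') := by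
    intro i
    rw [← add_sum_erase _ _ (mem_univ i), ← sum_filter_add_sum_filter_not _ (i < ·)]
    congr 3 <;> ext i' <;> simp only [mem_filter, mem_erase, mem_univ, and_true, true_and] <;> grind
  have hlower : ∑ i, ∑ i' with i' < i, F i i' = ∑ i, ∑ i' with i < i', F i i' := by
    rw [sum_comm' (t' := univ) (s' := fun i' => {i | i' < i}) (fun _ _ => by simp)]
    simp only [hF]
  rw [sum_congr rfl fun i _ => hrow i, sum_add_distrib, sum_add_distrib, hlower, two_mul]

section Randomization

variable {N : ℕ} {J : Type*} [DecidableEq J]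

def treated (j : J) (i : Fin N) (T : Fin N → J) : ℝ := if T i = j then 1 else 0

lemma treated_mul_treated_self (j j' : J) (i : Fin N) (T : Fin N → J) :
    treated j i T * treated j' i T = treated j i T * (if j = j' then 1 else 0) := by
  unfold treated
  split_ifs <;> simp_all

variable [Fintype J] {Nj : J → ℕ}

lemma mem_assignments {T : Fin N → J} :
    T ∈ assignments N Nj ↔ ∀ j, #{i | T i = j} = Nj j := by
  simp [assignments]

lemma assignments_nonempty (hsum : ∑ j, Nj j = N) : (assignments N Nj).Nonempty := by
  let e : (Σ j, Fin (Nj j)) ≃ Fin N := Fintype.equivOfCardEq (by simp [hsum])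
  refine ⟨fun i => (e.symm i).1, mem_assignments.2 fun j => ?_⟩
  calc #{i | (e.symm i).1 = j} = #{s : Σ j, Fin (Nj j) | s.1 = j} :=
        card_equiv e.symm (by simp)
    _ = Nj j := by
        rw [card_filter, Fintype.sum_sigma]
        simp [apply_ite]

lemma comp_perm_mem_assignments {T : Fin N → J} (σ : Equiv.Perm (Fin N))
    (hT : T ∈ assignments N Nj) : T ∘ σ ∈ assignments N Nj := by
  rw [mem_assignments] at hT ⊢
  intro j
  rw [← hT j]
  exact card_equiv σ (by simp)

lemma expect_congr {f g : (Fin N → J) → ℝ} (h : ∀ T ∈ assignments N Nj, f T = g T) :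
    expect Nj f = expect Nj g := by
  rw [_root_.expect, _root_.expect, sum_congr rfl h]

lemma expect_add (f g : (Fin N → J) → ℝ) :
    expect Nj (fun T => f T + g T) = expect Nj f + expect Nj g := by
  simp only [_root_.expect, sum_add_distrib, add_div]

lemma expect_const_mul (c : ℝ) (f : (Fin N → J) → ℝ) :
    expect Nj (fun T => c * f T) = c * expect Nj f := by
  simp only [_root_.expect, ← mul_sum, mul_div_assoc]

lemma expect_sum {ι : Type*} (s : Finset ι) (f : ι → (Fin N → J) → ℝ) :
    expect Nj (fun T => ∑ k ∈ s, f k T) = ∑ k ∈ s, expect Nj (f k) := by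
  simp only [_root_.expect, sum_div]
  exact sum_comm

lemma expect_const (hA : (assignments N Nj).Nonempty) (c : ℝ) :
    expect Nj (fun _ : Fin N → J => c) = c := by
  have : ((assignments N Nj).card : ℝ) ≠ 0 := by exact_mod_cast hA.card_pos.ne'
  rw [_root_.expect, sum_const, nsmul_eq_mul, mul_div_cancel_left₀ _ this]

lemma expect_comp_perm (σ : Equiv.Perm (Fin N)) (f : (Fin N → J) → ℝ) :
    expect Nj (fun T => f (T ∘ σ)) = expect Nj f := by
  rw [_root_.expect, _root_.expect]
  congr 1
  exact sum_nbij' (· ∘ σ) (· ∘ σ.symm) (fun T hT => comp_perm_mem_assignments σ hT)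
    (fun T hT => comp_perm_mem_assignments σ.symm hT) (fun T _ => by ext; simp)
    (fun T _ => by ext; simp) (fun T _ => rfl)

lemma expect_apply_eq (g : J → ℝ) (i k : Fin N) :
    expect Nj (fun T => g (T i)) = expect Nj (fun T => g (T k)) := by
  rw [← expect_comp_perm (Equiv.swap k i)]
  simp

lemma exists_perm_apply_eq_and_apply_eq {i i' k k' : Fin N} (hi : i ≠ i') (hk : k ≠ k') :
    ∃ σ : Equiv.Perm (Fin N), σ k = i ∧ σ k' = i' := by
  refine ⟨(Equiv.swap k i).trans (Equiv.swap (Equiv.swap k i k') i'), ?_, by simp⟩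
  have : Equiv.swap k i k' ≠ i := fun h =>
    hk ((Equiv.swap k i).injective (h.trans (Equiv.swap_apply_left k i).symm)).symm
  simp only [Equiv.trans_apply, Equiv.swap_apply_left]
  exact Equiv.swap_apply_of_ne_of_ne this.symm hi

lemma expect_apply₂_eq (g : J → J → ℝ) {i i' k k' : Fin N} (hi : i ≠ i') (hk : k ≠ k') :
    expect Nj (fun T => g (T i) (T i')) = expect Nj (fun T => g (T k) (T k')) := by
  obtain ⟨σ, hσk, hσk'⟩ := exists_perm_apply_eq_and_apply_eq hi hk
  rw [← expect_comp_perm σ fun T => g (T k) (T k')]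
  simp only [Function.comp_apply, hσk, hσk']

lemma rcov_eq_expect_mul_sub (hA : (assignments N Nj).Nonempty) (f g : (Fin N → J) → ℝ) :
    rcov Nj f g = expect Nj (fun T => f T * g T) - expect Nj f * expect Nj g := by
  have hexpand : ∀ T, (f T - expect Nj f) * (g T - expect Nj g)
      = f T * g T + (-expect Nj g * f T + (-expect Nj f * g T + expect Nj f * expect Nj g)) :=
    fun T => by ring
  simp only [rcov, hexpand, expect_add, expect_const_mul, expect_const hA]
  ring

lemma rvar_const_add_sum_mul (hA : (assignments N Nj).Nonempty) {ι : Type*} (s : Finset ι)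
    (C : ℝ) (w : ι → ℝ) (f : ι → (Fin N → J) → ℝ) :
    rvar Nj (fun T => C + ∑ k ∈ s, w k * f k T)
      = ∑ k ∈ s, ∑ k' ∈ s, w k * w k' * rcov Nj (f k) (f k') := by
  have hmean : expect Nj (fun T => C + ∑ k ∈ s, w k * f k T)
      = C + ∑ k ∈ s, w k * expect Nj (f k) := by
    simp only [expect_add, expect_const hA, expect_sum, expect_const_mul]
  have hsq : ∀ T, (C + ∑ k ∈ s, w k * f k T - (C + ∑ k ∈ s, w k * expect Nj (f k))) ^ 2
      = ∑ k ∈ s, ∑ k' ∈ s, w k * w k' *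
          ((f k T - expect Nj (f k)) * (f k' T - expect Nj (f k'))) := by
    intro T
    rw [add_sub_add_left_eq_sub, ← sum_sub_distrib, sq, sum_mul_sum]
    exact sum_congr rfl fun k _ => sum_congr rfl fun k' _ => by ring
  simp only [rvar, hmean, hsq, expect_sum, expect_const_mul, rcov]

lemma sum_treated {T : Fin N → J} (hT : T ∈ assignments N Nj) (j : J) :
    ∑ i, treated j i T = Nj j := by
  simp only [treated, sum_boole, mem_assignments.1 hT]

lemma sum_sum_erase_treated_mul {T : Fin N → J} (hT : T ∈ assignments N Nj) (j j' : J) :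
    ∑ i, ∑ i' ∈ univ.erase i, treated j i T * treated j' i' T
      = Nj j * (Nj j' - if j = j' then 1 else 0) := by
  calc ∑ i, ∑ i' ∈ univ.erase i, treated j i T * treated j' i' T
      = ∑ i, treated j i T * (Nj j' - if j = j' then 1 else 0) := by
        refine sum_congr rfl fun i _ => ?_
        rw [← mul_sum, sum_erase_eq_sub (mem_univ i), sum_treated hT, mul_sub,
          treated_mul_treated_self, mul_sub]
    _ = Nj j * (Nj j' - if j = j' then 1 else 0) := by rw [← sum_mul, sum_treated hT]

lemma expect_treated (hsum : ∑ j, Nj j = N) (j : J) (i : Fin N) :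
    expect Nj (treated j i) = Nj j / N := by
  have hN : (N : ℝ) ≠ 0 := Nat.cast_ne_zero.2 (Fin.pos i).ne'
  have hsame : ∀ k, expect Nj (treated j k) = expect Nj (treated j i) := fun k =>
    expect_apply_eq (fun a => if a = j then 1 else 0) k i
  have htotal : ∑ k : Fin N, expect Nj (treated j k) = Nj j := by
    rw [← expect_sum, expect_congr fun T hT => sum_treated hT j,
      expect_const (assignments_nonempty hsum)]
  rw [sum_congr rfl fun k _ => hsame k, sum_const, card_univ, Fintype.card_fin,
    nsmul_eq_mul] at htotal
  rw [← htotal, mul_div_cancel_left₀ _ hN]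

lemma expect_treated_mul_treated_of_ne (hsum : ∑ j, Nj j = N) {i i' : Fin N} (hi : i ≠ i')
    (j j' : J) :
    expect Nj (fun T => treated j i T * treated j' i' T)
      = Nj j * (Nj j' - if j = j' then 1 else 0) / (N * (N - 1)) := by
  have hN : 2 ≤ N := by
    have := Fin.val_ne_of_ne hi
    omega
  have hsame : ∀ k k', k ≠ k' → expect Nj (fun T => treated j k T * treated j' k' T)
      = expect Nj (fun T => treated j i T * treated j' i' T) := fun k k' hk =>
    expect_apply₂_eq (fun a b => (if a = j then 1 else 0) * (if b = j' then 1 else 0)) hk hi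
  have htotal : ∑ k : Fin N, ∑ k' ∈ univ.erase k,
      expect Nj (fun T => treated j k T * treated j' k' T)
      = Nj j * (Nj j' - if j = j' then 1 else 0) := by
    simp only [← expect_sum]
    rw [expect_congr fun T hT => sum_sum_erase_treated_mul hT j j',
      expect_const (assignments_nonempty hsum)]
  rw [sum_congr rfl fun k _ => sum_congr rfl fun k' hk' => hsame k k' (ne_of_mem_erase hk').symm]
    at htotal
  simp only [sum_const, Finset.card_erase_of_mem (mem_univ _), card_univ, Fintype.card_fin,
    nsmul_eq_mul, Nat.cast_pred (by omega : 0 < N)] at htotal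
  have hN' : (2 : ℝ) ≤ N := by exact_mod_cast hN
  rw [← htotal, ← mul_assoc, mul_div_cancel_left₀ _ (by nlinarith : (0 : ℝ) < N * (N - 1)).ne']

lemma expect_treated_mul_treated (hsum : ∑ j, Nj j = N) (i i' : Fin N) (j j' : J) :
    expect Nj (fun T => treated j i T * treated j' i' T)
      = if i = i' then (if j = j' then 1 else 0) * ((Nj j : ℝ) / N)
        else Nj j * ((Nj j' : ℝ) - if j = j' then 1 else 0) / (N * (N - 1)) := by
  rcases eq_or_ne i i' with rfl | hi
  · simp only [if_true, treated_mul_treated_self, mul_comm _ (ite _ _ _), expect_const_mul,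
      expect_treated hsum]
  · rw [if_neg hi, expect_treated_mul_treated_of_ne hsum hi]

end Randomization

section Population

variable {N : ℕ} {J : Type*} (Y : Fin N → J → ℝ)

noncomputable def Scov (j j' : J) : ℝ :=
  (∑ i, (Y i j - Pmean Y j) * (Y i j' - Pmean Y j')) / ((N : ℝ) - 1)

lemma Scov_self (j : J) : Scov Y j j = S2 Y j := by
  simp only [Scov, S2, sq]

lemma Scov_comm (j j' : J) : Scov Y j j' = Scov Y j' j := by
  simp only [Scov, mul_comm]

lemma two_mul_Scov (j j' : J) : 2 * Scov Y j j' = S2 Y j + S2 Y j' - S2diff Y j j' := by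
  simp only [Scov, S2, S2diff, mul_div_assoc', ← add_div, ← sub_div, mul_sum,
    ← sum_add_distrib, ← sum_sub_distrib]
  congr 1
  exact sum_congr rfl fun i _ => by ring

lemma sum_eq_mul_Pmean (hN : N ≠ 0) (j : J) : ∑ i, Y i j = N * Pmean Y j := by
  rw [Pmean, mul_div_cancel₀ _ (Nat.cast_ne_zero.2 hN)]

lemma sum_mul_eq_Scov (hN : 2 ≤ N) (j j' : J) :
    ∑ i, Y i j * Y i j' = (N - 1) * Scov Y j j' + N * Pmean Y j * Pmean Y j' := by
  have hN1 : (N : ℝ) - 1 ≠ 0 := by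
    have : (2 : ℝ) ≤ N := by exact_mod_cast hN
    linarith
  rw [Scov, mul_div_cancel₀ _ hN1]
  simp only [sub_mul, mul_sub, sum_sub_distrib, ← sum_mul, ← mul_sum,
    sum_eq_mul_Pmean Y (by omega : N ≠ 0), sum_const, card_univ, Fintype.card_fin, nsmul_eq_mul]
  ring

variable [DecidableEq J] (Nj : J → ℕ)

lemma pObs_eq_sum (j : J) (T : Fin N → J) :
    pObs Y Nj j T = (Nj j : ℝ)⁻¹ * ∑ i, Y i j * treated j i T := by
  simp only [pObs, sum_filter, treated, mul_ite, mul_one, mul_zero, inv_mul_eq_div]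

variable [Fintype J] {Nj}

lemma expect_pObs (hsum : ∑ j, Nj j = N) {j : J} (hj : Nj j ≠ 0) :
    expect Nj (pObs Y Nj j) = Pmean Y j := by
  rw [funext (pObs_eq_sum Y Nj j), expect_const_mul, expect_sum]
  simp only [expect_const_mul, expect_treated hsum, Pmean]
  rw [← sum_mul]
  field_simp

lemma rcov_pObs (hN : 2 ≤ N) (hsum : ∑ j, Nj j = N) {j j' : J} (hj : Nj j ≠ 0)
    (hj' : Nj j' ≠ 0) :
    rcov Nj (pObs Y Nj j) (pObs Y Nj j')
      = ((if j = j' then (Nj j : ℝ)⁻¹ else 0) - (N : ℝ)⁻¹) * Scov Y j j' := by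
  have hprod : ∀ T, pObs Y Nj j T * pObs Y Nj j' T = ((Nj j : ℝ)⁻¹ * (Nj j' : ℝ)⁻¹) *
      ∑ i, ∑ i', Y i j * Y i' j' * (treated j i T * treated j' i' T) := by
    intro T
    rw [pObs_eq_sum, pObs_eq_sum, mul_mul_mul_comm, sum_mul_sum]
    exact congrArg _ (sum_congr rfl fun i _ => sum_congr rfl fun i' _ => by ring)
  rw [rcov_eq_expect_mul_sub (assignments_nonempty hsum), expect_pObs Y hsum hj,
    expect_pObs Y hsum hj']
  simp only [hprod, expect_const_mul, expect_sum, expect_treated_mul_treated hsum,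
    sum_sum_mul_ite_eq, sum_eq_mul_Pmean Y (by omega : N ≠ 0), sum_mul_eq_Scov Y hN]
  have hN2 : (2 : ℝ) ≤ N := by exact_mod_cast hN
  have hN1 : (N : ℝ) - 1 ≠ 0 := by linarith
  split_ifs with h
  · subst h
    field_simp
    ring
  · field_simp
    ring

theorem rvar_const_add_sum_mul_pObs [LinearOrder J] (hN : 2 ≤ N) (hsum : ∑ j, Nj j = N)
    (hpos : ∀ j, Nj j ≠ 0) (C : ℝ) (w : J → ℝ) :
    rvar Nj (fun T => C + ∑ j, w j * pObs Y Nj j T)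
      = ∑ j, w j ^ 2 * ((Nj j : ℝ)⁻¹ - (N : ℝ)⁻¹) * S2 Y j
        - (N : ℝ)⁻¹ * ∑ j, ∑ j' with j < j', w j * w j' * (S2 Y j + S2 Y j' - S2diff Y j j') := by
  have hpairs := sum_sum_eq_sum_add_two_mul_sum_lt (fun j j' => w j * w j' * Scov Y j j')
    fun j j' => by rw [Scov_comm]; ring
  have hsplit : ∀ j j', w j * w j' * (((if j = j' then (Nj j : ℝ)⁻¹ else 0) - (N : ℝ)⁻¹)
      * Scov Y j j') = (if j = j' then w j * w j' * (Nj j : ℝ)⁻¹ * Scov Y j j' else 0)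
        - (N : ℝ)⁻¹ * (w j * w j' * Scov Y j j') := fun j j' => by split_ifs <;> ring
  have hdiag : ∑ j, w j ^ 2 * ((Nj j : ℝ)⁻¹ - (N : ℝ)⁻¹) * S2 Y j
      = ∑ j, w j * w j * (Nj j : ℝ)⁻¹ * S2 Y j - (N : ℝ)⁻¹ * ∑ j, w j * w j * S2 Y j := by
    rw [mul_sum, ← sum_sub_distrib]
    exact sum_congr rfl fun j _ => by ring
  have hoff : ∑ j, ∑ j' with j < j', w j * w j' * (S2 Y j + S2 Y j' - S2diff Y j j')
      = 2 * ∑ j, ∑ j' with j < j', w j * w j' * Scov Y j j' := by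
    simp only [← two_mul_Scov, mul_sum]
    exact sum_congr rfl fun j _ => sum_congr rfl fun j' _ => by ring
  rw [rvar_const_add_sum_mul (assignments_nonempty hsum)]
  simp only [rcov_pObs Y hN hsum (hpos _) (hpos _), hsplit, sum_sub_distrib, sum_ite_eq,
    mem_univ, if_true, ← mul_sum, hpairs, Scov_self, hdiag, hoff]
  ring

end Population

lemma lam_mul_self {K : ℕ} (ℓ : Finset (Fin K)) (z : Fin (2 ^ K)) : lam ℓ z * lam ℓ z = 1 := by
  rw [lam, ← prod_mul_distrib]
  exact prod_eq_one fun k _ => by split_ifs <;> norm_num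

theorem rvar_linearized_logitFE_general {N K : ℕ} (hN : 2 ≤ N)
    (Y : Fin N → Fin (2 ^ K) → ℝ) (Nj : Fin (2 ^ K) → ℕ)
    (hpos : ∀ z, 1 ≤ Nj z) (hsum : ∑ z, Nj z = N)
    (ℓ : Finset (Fin K)) :
    rvar Nj (fun T =>
        (1 / 2 ^ (K - 1)) * ∑ z, lam ℓ z * Real.log (Pmean Y z / (1 - Pmean Y z))
          + (1 / 2 ^ (K - 1)) * ∑ z, lam ℓ z *
              ((pObs Y Nj z T - Pmean Y z) / (Pmean Y z * (1 - Pmean Y z)))) =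
      (1 / 2 ^ (2 * (K - 1))) *
        ((∑ z, ((N : ℝ) - (Nj z : ℝ)) * S2 Y z /
            ((N : ℝ) * (Nj z : ℝ) * (Pmean Y z) ^ 2 * (1 - Pmean Y z) ^ 2))
          - (1 / (N : ℝ)) * ∑ z, ∑ z' ∈ Finset.univ.filter (fun z' => z < z'),
              lam ℓ z * lam ℓ z' * ((S2 Y z + S2 Y z' - S2diff Y z z') /
                (Pmean Y z * Pmean Y z' * (1 - Pmean Y z) * (1 - Pmean Y z')))) := by
  set a : ℝ := 1 / 2 ^ (K - 1)
  set w : Fin (2 ^ K) → ℝ := fun z => a * lam ℓ z / (Pmean Y z * (1 - Pmean Y z))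
  have hlin : ∀ T, a * ∑ z, lam ℓ z * ((pObs Y Nj z T - Pmean Y z) /
      (Pmean Y z * (1 - Pmean Y z))) = -∑ z, w z * Pmean Y z + ∑ z, w z * pObs Y Nj z T := by
    intro T
    rw [mul_sum, ← sum_neg_distrib, ← sum_add_distrib]
    exact sum_congr rfl fun z _ => by ring
  have hNj : ∀ z, Nj z ≠ 0 := fun z => Nat.one_le_iff_ne_zero.1 (hpos z)
  have ha : (1 / 2 ^ (2 * (K - 1)) : ℝ) = a ^ 2 := by
    rw [mul_comm, pow_mul, one_div_pow]
  simp only [hlin, ← add_assoc]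
  rw [rvar_const_add_sum_mul_pObs Y hN hsum hNj, ha, mul_sub]
  congr 1
  · rw [mul_sum]
    refine sum_congr rfl fun z _ => ?_
    rw [inv_sub_inv (Nat.cast_ne_zero.2 (hNj z)) (Nat.cast_ne_zero.2 (by omega))]
    simp only [w, div_eq_mul_inv, mul_inv, mul_pow, ← inv_pow]
    linear_combination (a ^ 2 * (Pmean Y z)⁻¹ ^ 2 * (1 - Pmean Y z)⁻¹ ^ 2 * (N - Nj z) *
      ((Nj z : ℝ)⁻¹ * (N : ℝ)⁻¹) * S2 Y z) * lam_mul_self ℓ z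
  · simp only [mul_sum]
    refine sum_congr rfl fun z _ => sum_congr rfl fun z' _ => ?_
    simp only [w, div_eq_mul_inv, mul_inv]
    ring

/-- Variance of the first-order linearization of the logit factorial effect estimator:
if `0 < P_z < 1` for all `z` then, with
`θ̃_ℓ = θ_ℓ + 2^{-(K-1)} Σ_z λ_{ℓ,z} (p_z - P_z)/(P_z(1-P_z))` where
`θ_ℓ = 2^{-(K-1)} Σ_z λ_{ℓ,z} log(P_z/(1-P_z))`,
`Var(θ̃_ℓ) = 2^{-2(K-1)} ( Σ_z (N-N_z) S_z² / (N N_z P_z² (1-P_z)²)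
  - (1/N) Σ_{z<z'} λ_{ℓ,z} λ_{ℓ,z'} (S_z² + S_{z'}² - S²_{z-z'})/(P_z P_{z'} (1-P_z)(1-P_{z'})) )`. -/
theorem rvar_linearized_logitFE {N K : ℕ} (hN : 2 ≤ N)
    (Y : Fin N → Fin (2 ^ K) → ℝ) (Nj : Fin (2 ^ K) → ℕ)
    (hpos : ∀ z, 1 ≤ Nj z) (hsum : ∑ z, Nj z = N)
    (hP0 : ∀ z, 0 < Pmean Y z) (hP1 : ∀ z, Pmean Y z < 1)
    (ℓ : Finset (Fin K)) (hℓ : ℓ.Nonempty) :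
    rvar Nj (fun T =>
        (1 / 2 ^ (K - 1)) * ∑ z, lam ℓ z * Real.log (Pmean Y z / (1 - Pmean Y z))
          + (1 / 2 ^ (K - 1)) * ∑ z, lam ℓ z *
              ((pObs Y Nj z T - Pmean Y z) / (Pmean Y z * (1 - Pmean Y z)))) =
      (1 / 2 ^ (2 * (K - 1))) *
        ((∑ z, ((N : ℝ) - (Nj z : ℝ)) * S2 Y z /
            ((N : ℝ) * (Nj z : ℝ) * (Pmean Y z) ^ 2 * (1 - Pmean Y z) ^ 2))
          - (1 / (N : ℝ)) * ∑ z, ∑ z' ∈ Finset.univ.filter (fun z' => z < z'),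
              lam ℓ z * lam ℓ z' * ((S2 Y z + S2 Y z' - S2diff Y z z') /
                (Pmean Y z * Pmean Y z' * (1 - Pmean Y z) * (1 - Pmean Y z')))) :=
  rvar_linearized_logitFE_general hN Y Nj hpos hsum ℓ
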